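/- For any feasible MSPEC power assignment (p*_v), the set K = {v(i) : v ∈ V, 0 ≤ i < ⌈p*_v/α⌉} is an s-t vertex cut of the discretized graph G′; hence the minimum s-t vertex cut K* of G′ satisfies |K*| ≤ Σ_{v∈V} ⌈p*_v/α⌉. -/

import Mathlib

open Finset

variable {α : Type*}

/-- The graph of surviving edges: an edge of `G` survives the power assignment `p`
iff `p u + p v < w (u,v)`; edges with `p u + p v ≥ w` are removed. -/
def cutGraph (G : SimpleGraph α) (w : Sym2 α → ℝ) (p : α → ℝ) : SimpleGraph α where
  Adj u v := G.Adj u v ∧ p u + p v < w s(u, v)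
  symm := by
    constructor
    intro u v h
    refine ⟨h.1.symm, ?_⟩
    rw [Sym2.eq_swap]
    linarith [h.2]
  loopless := ⟨fun u h => G.loopless.1 u h.1⟩

/-- MSPEC feasibility: `p s = p t = 0`, powers nonnegative, and removing the
edges `(u,v)` with `p u + p v ≥ w (u,v)` disconnects `s` from `t`. -/
def Feasible (G : SimpleGraph α) (w : Sym2 α → ℝ) (s t : α) (p : α → ℝ) : Prop :=
  p s = 0 ∧ p t = 0 ∧ (∀ v, 0 ≤ p v) ∧ ¬ (cutGraph G w p).Reachable s t

/-- The uniform (bottleneck) power assignment: power `q` on every vertex of `V`,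
and `0` on `s` and `t`. -/
def uniformP [DecidableEq α] (s t : α) (q : ℝ) : α → ℝ :=
  fun v => if v = s ∨ v = t then 0 else q

/-- Deleting a vertex set `K` from a graph (all edges incident to `K` disappear). -/
def delV (H : SimpleGraph α) (K : Set α) : SimpleGraph α where
  Adj u v := H.Adj u v ∧ u ∉ K ∧ v ∉ K
  symm := ⟨fun u v h => ⟨h.1.symm, h.2.2, h.2.1⟩⟩
  loopless := ⟨fun u h => H.loopless.1 u h.1⟩

/-- `K` is an `s`-`t` vertex cut of `H`. -/
def IsCut (H : SimpleGraph α) (s t : α) (K : Set α) : Prop :=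
  s ∉ K ∧ t ∉ K ∧ ¬ (delV H K).Reachable s t

/-- The power represented by a copy-vertex of the discretized graph:
copy `(v, i)` represents power `i * al` (and copies of `s`, `t` have power `0`). -/
def copyPow [DecidableEq α] (s t : α) (al : ℝ) (a : α × ℕ) : ℝ :=
  if a.1 = s ∨ a.1 = t then 0 else a.2 * al

/-- Validity of a copy-vertex: each `v ∈ V` has copies `v(0), …, v(c-1)`,
while `s` and `t` are represented by their `0`-th copy only. -/
def copyValid [DecidableEq α] (s t : α) (c : ℕ) (a : α × ℕ) : Prop :=
  if a.1 = s ∨ a.1 = t then a.2 = 0 else a.2 < c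

/-- The discretized graph `G'`: vertices are copies `v(i)`; there is an edge
`(u(i), v(j))` iff `(u,v)` is an edge of `G` and `iα + jα < w (u,v)`
(copies of `s`, `t` count with power `0`). -/
def discGraph [DecidableEq α] (G : SimpleGraph α) (w : Sym2 α → ℝ) (s t : α) (al : ℝ)
    (c : ℕ) : SimpleGraph (α × ℕ) where
  Adj a b := copyValid s t c a ∧ copyValid s t c b ∧ G.Adj a.1 b.1 ∧
      copyPow s t al a + copyPow s t al b < w s(a.1, b.1)
  symm := by
    constructor
    intro a b h
    refine ⟨h.2.1, h.1, h.2.2.1.symm, ?_⟩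
    rw [Sym2.eq_swap]
    linarith [h.2.2.2]
  loopless := ⟨fun a h => G.loopless.1 a.1 h.2.2.1⟩

/-- A set of vertices of the discretized graph consisting only of valid copies of
vertices of `V` (i.e. copy-vertices, excluding `s` and `t`). -/
def AllowedCut (s t : α) (c : ℕ) (K : Set (α × ℕ)) : Prop :=
  ∀ a ∈ K, a.1 ≠ s ∧ a.1 ≠ t ∧ a.2 < c

theorem setOf_snd_lt_eq_coe_sigma [Fintype α] (n : α → ℕ) :
    {a : α × ℕ | a.2 < n a.1} =
      ↑((univ.sigma fun v => range (n v)).map (Equiv.sigmaEquivProd α ℕ).toEmbedding) := by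
  ext ⟨v, i⟩
  simp

theorem finite_setOf_snd_lt [Fintype α] (n : α → ℕ) : {a : α × ℕ | a.2 < n a.1}.Finite := by
  rw [setOf_snd_lt_eq_coe_sigma]
  exact Finset.finite_toSet _

theorem ncard_setOf_snd_lt [Fintype α] (n : α → ℕ) :
    {a : α × ℕ | a.2 < n a.1}.ncard = ∑ v, n v := by
  rw [setOf_snd_lt_eq_coe_sigma, Set.ncard_coe_finset, card_map, card_sigma]
  simp

section Discretization

variable [DecidableEq α] {s t : α} {al : ℝ} {p : α → ℝ}

theorem le_copyPow_of_not_lt_ceil (hal : 0 < al) (hs : p s = 0) (ht : p t = 0)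
    {a : α × ℕ} (ha : ¬ (a.1 ≠ s ∧ a.1 ≠ t ∧ a.2 < ⌈p a.1 / al⌉₊)) :
    p a.1 ≤ copyPow s t al a := by
  unfold copyPow
  split_ifs with hst
  · rcases hst with h | h <;> simp [h, hs, ht]
  · push Not at hst ha
    exact (div_le_iff₀ hal).mp (Nat.ceil_le.mp (ha hst.1 hst.2))

/-- Projecting `v(i) ↦ v` maps `G'` minus the cut to the graph of surviving edges, because
every copy outside the cut carries at least the power `p v`. -/
theorem isCut_setOf_lt_ceil (G : SimpleGraph α) (w : Sym2 α → ℝ) (c : ℕ) (hal : 0 < al)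
    (hs : p s = 0) (ht : p t = 0) (hp : ¬ (cutGraph G w p).Reachable s t) :
    IsCut (discGraph G w s t al c) (s, 0) (t, 0)
      {a : α × ℕ | a.1 ≠ s ∧ a.1 ≠ t ∧ a.2 < ⌈p a.1 / al⌉₊} := by
  refine ⟨fun h => h.1 rfl, fun h => h.2.1 rfl, fun hR => hp (hR.map (f := ⟨Prod.fst, ?_⟩))⟩
  intro a b hab
  refine ⟨hab.1.2.2.1, ?_⟩
  calc p a.1 + p b.1 ≤ copyPow s t al a + copyPow s t al b :=
        add_le_add (le_copyPow_of_not_lt_ceil hal hs ht hab.2.1)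
          (le_copyPow_of_not_lt_ceil hal hs ht hab.2.2)
    _ < w s(a.1, b.1) := hab.1.2.2.2

end Discretization

theorem cut_from_feasible_solution_general [Fintype α] [DecidableEq α]
    (G : SimpleGraph α) (w : Sym2 α → ℝ) (s t : α)
    (al : ℝ) (hal : 0 < al) (c : ℕ)
    (p : α → ℝ) (hp : Feasible G w s t p) :
    IsCut (discGraph G w s t al c) (s, 0) (t, 0)
      {a : α × ℕ | a.1 ≠ s ∧ a.1 ≠ t ∧ a.2 < ⌈p a.1 / al⌉₊} ∧
    ∀ Kstar : Set (α × ℕ),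
      IsCut (discGraph G w s t al c) (s, 0) (t, 0) Kstar →
      (∀ K', IsCut (discGraph G w s t al c) (s, 0) (t, 0) K' → K'.Finite →
        Kstar.ncard ≤ K'.ncard) →
      Kstar.ncard ≤ ∑ v, (if v = s ∨ v = t then 0 else ⌈p v / al⌉₊) := by
  obtain ⟨hs, ht, -, hdisc⟩ := hp
  have hcut := isCut_setOf_lt_ceil G w c hal hs ht hdisc
  set n : α → ℕ := fun v => if v = s ∨ v = t then 0 else ⌈p v / al⌉₊
  have hset : {a : α × ℕ | a.1 ≠ s ∧ a.1 ≠ t ∧ a.2 < ⌈p a.1 / al⌉₊} =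
      {a : α × ℕ | a.2 < n a.1} := by
    ext a
    by_cases h : a.1 = s ∨ a.1 = t <;> simp [n, h] <;> tauto
  refine ⟨hcut, fun Kstar _ hmin => ?_⟩
  calc Kstar.ncard ≤ {a : α × ℕ | a.1 ≠ s ∧ a.1 ≠ t ∧ a.2 < ⌈p a.1 / al⌉₊}.ncard :=
        hmin _ hcut (hset ▸ finite_setOf_snd_lt _)
    _ = ∑ v, n v := by rw [hset, ncard_setOf_snd_lt]

/-- for any feasible MSPEC assignment `p*`, the set of the first
`⌈p*_v/α⌉` copies of each vertex is an `s`-`t` vertex cut of `G'`; hence any minimum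
`s`-`t` vertex cut `K*` of `G'` satisfies `|K*| ≤ Σ_v ⌈p*_v/α⌉`. -/
theorem cut_from_feasible_solution [Fintype α] [DecidableEq α]
    (G : SimpleGraph α) (w : Sym2 α → ℝ) (s t : α) (hst : s ≠ t)
    (al : ℝ) (hal : 0 < al) (c : ℕ)
    (p : α → ℝ) (hp : Feasible G w s t p)
    (hc : ∀ v, ⌈p v / al⌉₊ ≤ c) :
    IsCut (discGraph G w s t al c) (s, 0) (t, 0)
      {a : α × ℕ | a.1 ≠ s ∧ a.1 ≠ t ∧ a.2 < ⌈p a.1 / al⌉₊} ∧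
    ∀ Kstar : Set (α × ℕ),
      IsCut (discGraph G w s t al c) (s, 0) (t, 0) Kstar →
      (∀ K', IsCut (discGraph G w s t al c) (s, 0) (t, 0) K' → K'.Finite →
        Kstar.ncard ≤ K'.ncard) →
      Kstar.ncard ≤ ∑ v, (if v = s ∨ v = t then 0 else ⌈p v / al⌉₊) :=
  cut_from_feasible_solution_general G w s t al hal c p hp
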